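/- (Trajectory-based optional stopping.) If the trajectory set S is locally arbitrage-free (respectively locally 0-neutral) and ν is a trajectory-based stopping time on S, then the stopped trajectory set S^ν is locally arbitrage-free (respectively locally 0-neutral). -/
import Mathlib


open Finset

/-- A (discrete) trajectory: a sequence of real numbers. -/
abbrev Traj : Type := ℕ → ℝ

/-- A portfolio: holdings `pos i S` at each rebalance `i` along trajectory `S`,
together with the trading horizon `N`. -/
structure Portfolio where
  pos : ℕ → Traj → ℝ
  N : Traj → ℕ

/-- Trading gain of portfolio `H` along `S`, starting at index `k`:
`Σ_{i=k}^{N_H(S)-1} H_i(S) (S_{i+1} - S_i)`. -/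
noncomputable def pfGain (H : Portfolio) (k : ℕ) (S : Traj) : ℝ :=
  ∑ i ∈ Finset.Ico k (H.N S), H.pos i S * (S (i + 1) - S i)

/-- Conditioning set `S_{(S,k)}`: trajectories in `𝒮` agreeing with `S` up to index `k`. -/
def condSet (𝒮 : Set Traj) (S : Traj) (k : ℕ) : Set Traj :=
  {T | T ∈ 𝒮 ∧ ∀ i ≤ k, T i = S i}

/-- The zero portfolio. -/
def zeroPf : Portfolio := ⟨fun _ _ => 0, fun _ => 1⟩

/-- Upper minmax bound `V̄(Z) = inf_H sup_S [Z(S) - gain]`. -/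
noncomputable def upperBound (𝒮 : Set Traj) (𝓗 : Set Portfolio) (Z : Traj → ℝ) : ℝ :=
  sInf ((fun H => sSup ((fun S => Z S - pfGain H 0 S) '' 𝒮)) '' 𝓗)

/-- Lower minmax bound `V_(Z) = -V̄(-Z)`. -/
noncomputable def lowerBound (𝒮 : Set Traj) (𝓗 : Set Portfolio) (Z : Traj → ℝ) : ℝ :=
  - upperBound 𝒮 𝓗 (fun S => - Z S)

/-- Conditional upper minmax bound `V̄_k(S, Z)`. -/
noncomputable def upperBoundK (𝒮 : Set Traj) (𝓗 : Set Portfolio) (S : Traj) (k : ℕ)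
    (Z : Traj → ℝ) : ℝ :=
  sInf ((fun H => sSup ((fun T => Z T - pfGain H k T) '' condSet 𝒮 S k)) '' 𝓗)

/-- Conditional lower minmax bound `V_k(S, Z) = -V̄_k(S, -Z)`. -/
noncomputable def lowerBoundK (𝒮 : Set Traj) (𝓗 : Set Portfolio) (S : Traj) (k : ℕ)
    (Z : Traj → ℝ) : ℝ :=
  - upperBoundK 𝒮 𝓗 S k (fun T => - Z T)

/-- The market is 0-neutral: `V̄(0) = 0`. -/
def ZeroNeutral (𝒮 : Set Traj) (𝓗 : Set Portfolio) : Prop :=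
  upperBound 𝒮 𝓗 (fun _ => 0) = 0

/-- The market is conditionally 0-neutral at node `(S,k)`: `V̄_k(S, 0) = 0`. -/
def CondZeroNeutral (𝒮 : Set Traj) (𝓗 : Set Portfolio) (S : Traj) (k : ℕ) : Prop :=
  upperBoundK 𝒮 𝓗 S k (fun _ => 0) = 0

/-- `H` is an arbitrage strategy. -/
def IsArbitrage (𝒮 : Set Traj) (H : Portfolio) : Prop :=
  (∀ S ∈ 𝒮, 0 ≤ pfGain H 0 S) ∧ ∃ S ∈ 𝒮, 0 < pfGain H 0 S

/-- The market is arbitrage-free. -/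
def ArbitrageFree (𝒮 : Set Traj) (𝓗 : Set Portfolio) : Prop :=
  ∀ H ∈ 𝓗, ¬ IsArbitrage 𝒮 H

/-- Trajectory based stopping time. -/
def IsStoppingTime (𝒮 : Set Traj) (ν : Traj → ℕ) : Prop :=
  ∀ S ∈ 𝒮, ∀ T ∈ 𝒮, (∀ i ≤ ν S, T i = S i) → ν T = ν S

/-- Non-anticipative portfolio. -/
def NonAnticipative (𝒮 : Set Traj) (H : Portfolio) : Prop :=
  ∀ S ∈ 𝒮, ∀ T ∈ 𝒮, ∀ j, (∀ i ≤ j, T i = S i) → H.pos j T = H.pos j S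

/-- `(S,j)` is a 0-neutral node: `sup Δ ≥ 0` and `inf Δ ≤ 0` over the conditioning set. -/
def ZeroNeutralNode (𝒮 : Set Traj) (S : Traj) (j : ℕ) : Prop :=
  0 ≤ sSup ((fun T => T (j + 1) - S j) '' condSet 𝒮 S j) ∧
    sInf ((fun T => T (j + 1) - S j) '' condSet 𝒮 S j) ≤ 0

/-- `(S,j)` is an up-down node. -/
def UpDownNode (𝒮 : Set Traj) (S : Traj) (j : ℕ) : Prop :=
  (∃ T ∈ condSet 𝒮 S j, S j < T (j + 1)) ∧ ∃ T ∈ condSet 𝒮 S j, T (j + 1) < S j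

/-- `(S,j)` is a flat node. -/
def FlatNode (𝒮 : Set Traj) (S : Traj) (j : ℕ) : Prop :=
  ∀ T ∈ condSet 𝒮 S j, T (j + 1) = S j

/-- `𝒮` is locally arbitrage-free: every node is up-down or flat. -/
def LocallyArbitrageFree (𝒮 : Set Traj) : Prop :=
  ∀ S ∈ 𝒮, ∀ j, UpDownNode 𝒮 S j ∨ FlatNode 𝒮 S j

/-- `𝒮` is locally 0-neutral: every node is 0-neutral. -/
def LocallyZeroNeutral (𝒮 : Set Traj) : Prop :=
  ∀ S ∈ 𝒮, ∀ j, ZeroNeutralNode 𝒮 S j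

/-- `N_H` is initially bounded. -/
def InitiallyBounded (𝒮 : Set Traj) (H : Portfolio) : Prop :=
  ∃ ρ : Traj → ℕ, (∃ B, ∀ S, ρ S ≤ B) ∧
    ∀ S ∈ 𝒮, ∃ B, ∀ T ∈ condSet 𝒮 S (ρ S), H.N T ≤ B

/-- The market is free of local arbitrage: at every node `(S,H,j)` either
`inf_{T} H_j(S)Δ_j T < 0` or `sup_{T} H_j(S)Δ_j T ≤ 0`. -/
def FreeOfLocalArbitrage (𝒮 : Set Traj) (𝓗 : Set Portfolio) : Prop :=
  ∀ H ∈ 𝓗, ∀ S ∈ 𝒮, ∀ j,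
    (∃ T ∈ condSet 𝒮 S j, H.pos j S * (T (j + 1) - S j) < 0) ∨
    ∀ T ∈ condSet 𝒮 S j, H.pos j S * (T (j + 1) - S j) ≤ 0

/-- Liquidated portfolio: holdings vanish from the horizon on. -/
def Liquidated (H : Portfolio) : Prop :=
  ∀ S : Traj, ∀ i, H.N S ≤ i → H.pos i S = 0

/-- Coordinatewise sum of portfolios, horizon the max of the horizons. -/
def addPf (H1 H2 : Portfolio) : Portfolio :=
  ⟨fun i S => H1.pos i S + H2.pos i S, fun S => max (H1.N S) (H2.N S)⟩

/-- Sum of two portfolio sets. -/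
def sumSet (𝓗1 𝓗2 : Set Portfolio) : Set Portfolio :=
  {H | ∃ H1 ∈ 𝓗1, ∃ H2 ∈ 𝓗2, H = addPf H1 H2}

/-- Negation of a portfolio. -/
def negPf (H : Portfolio) : Portfolio := ⟨fun i S => - H.pos i S, H.N⟩

/-- Stopped trajectory `S^ν`. -/
def stopTraj (ν : Traj → ℕ) (S : Traj) : Traj := fun i => S (min (ν S) i)

/-- Stopped trajectory set `𝒮^ν`. -/
def stopSet (𝒮 : Set Traj) (ν : Traj → ℕ) : Set Traj := (stopTraj ν) '' 𝒮

lemma stopTraj_eq_of_le {ν : Traj → ℕ} {S : Traj} {i : ℕ} (h : i ≤ ν S) :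
    stopTraj ν S i = S i := by
  simp [stopTraj, min_eq_right h]

/-- If `j < ν S` and the stopped trajectories of `T` and `S` agree up to `j`,
then `j < ν T` and `T` agrees with `S` up to `j`. -/
lemma agree_of_stop_agree {𝒮 : Set Traj} {ν : Traj → ℕ} (hν : IsStoppingTime 𝒮 ν)
    {S T : Traj} (hS : S ∈ 𝒮) (hT : T ∈ 𝒮) {j : ℕ} (hj : j < ν S)
    (hag : ∀ i ≤ j, stopTraj ν T i = stopTraj ν S i) :
    j < ν T ∧ ∀ i ≤ j, T i = S i := by
  have hlt : j < ν T := by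
    by_contra h
    push_neg at h
    have h1 : ∀ i ≤ ν T, S i = T i := by
      intro i hi
      have hij : i ≤ j := le_trans hi h
      have := hag i hij
      rw [stopTraj_eq_of_le hi, stopTraj_eq_of_le (le_of_lt (lt_of_le_of_lt hij hj))] at this
      exact this.symm
    have := hν T hT S hS h1
    omega
  refine ⟨hlt, fun i hi => ?_⟩
  have := hag i hi
  rwa [stopTraj_eq_of_le (le_of_lt (lt_of_le_of_lt hi hlt)),
    stopTraj_eq_of_le (le_of_lt (lt_of_le_of_lt hi hj))] at this

/-- If `j < ν S` and `T` agrees with `S` up to `j`, then `j < ν T`. -/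
lemma lt_nu_of_agree {𝒮 : Set Traj} {ν : Traj → ℕ} (hν : IsStoppingTime 𝒮 ν)
    {S T : Traj} (hS : S ∈ 𝒮) (hT : T ∈ 𝒮) {j : ℕ} (hj : j < ν S)
    (hag : ∀ i ≤ j, T i = S i) : j < ν T := by
  by_contra h
  push_neg at h
  have h1 : ∀ i ≤ ν T, S i = T i := fun i hi => (hag i (le_trans hi h)).symm
  have := hν T hT S hS h1
  omega

/-- For `j < ν S`, the conditioning set of the stopped set is the stopped image of
the original conditioning set. -/
lemma condSet_stop_eq {𝒮 : Set Traj} {ν : Traj → ℕ} (hν : IsStoppingTime 𝒮 ν)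
    {S : Traj} (hS : S ∈ 𝒮) {j : ℕ} (hj : j < ν S) :
    condSet (stopSet 𝒮 ν) (stopTraj ν S) j = stopTraj ν '' condSet 𝒮 S j := by
  ext Tb
  constructor
  · rintro ⟨⟨T, hT, rfl⟩, hag⟩
    obtain ⟨hlt, hag'⟩ := agree_of_stop_agree hν hS hT hj hag
    exact ⟨T, ⟨hT, hag'⟩, rfl⟩
  · rintro ⟨T, ⟨hT, hag⟩, rfl⟩
    have hlt : j < ν T := lt_nu_of_agree hν hS hT hj hag
    refine ⟨⟨T, hT, rfl⟩, fun i hi => ?_⟩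
    rw [stopTraj_eq_of_le (le_of_lt (lt_of_le_of_lt hi hlt)),
      stopTraj_eq_of_le (le_of_lt (lt_of_le_of_lt hi hj))]
    exact hag i hi

/-- For `j ≥ ν S`, nodes of the stopped set are flat. -/
lemma stop_flat {𝒮 : Set Traj} {ν : Traj → ℕ} (hν : IsStoppingTime 𝒮 ν)
    {S : Traj} (hS : S ∈ 𝒮) {j : ℕ} (hj : ν S ≤ j) :
    FlatNode (stopSet 𝒮 ν) (stopTraj ν S) j := by
  rintro Tb ⟨⟨T, hT, rfl⟩, hag⟩
  -- agreement on initial segment up to min (ν T) (ν S)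
  have key : ∀ i ≤ min (ν T) (ν S), T i = S i := by
    intro i hi
    have h1 : i ≤ ν T := le_trans hi (min_le_left _ _)
    have h2 : i ≤ ν S := le_trans hi (min_le_right _ _)
    have := hag i (le_trans h2 hj)
    rwa [stopTraj_eq_of_le h1, stopTraj_eq_of_le h2] at this
  have heq : ν T = ν S := by
    rcases le_total (ν T) (ν S) with h | h
    · have : ∀ i ≤ ν T, S i = T i := fun i hi =>
        (key i (le_min hi (le_trans hi h))).symm
      exact (hν T hT S hS this).symm
    · have : ∀ i ≤ ν S, T i = S i := fun i hi =>
        key i (le_min (le_trans hi h) hi)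
      exact hν S hS T hT this
  have hTS : T (ν S) = S (ν S) := by
    have := key (ν S) (le_min (le_of_eq heq.symm) le_rfl)
    exact this
  show stopTraj ν T (j + 1) = stopTraj ν S j
  simp only [stopTraj, heq]
  rw [min_eq_left (le_trans hj (Nat.le_succ _)), min_eq_left hj, hTS]

/-- For `j < ν S`, the increment value set at the stopped node equals the original one. -/
lemma valueSet_stop_eq {𝒮 : Set Traj} {ν : Traj → ℕ} (hν : IsStoppingTime 𝒮 ν)
    {S : Traj} (hS : S ∈ 𝒮) {j : ℕ} (hj : j < ν S) :
    (fun T => T (j + 1) - stopTraj ν S j) '' condSet (stopSet 𝒮 ν) (stopTraj ν S) j =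
      (fun T => T (j + 1) - S j) '' condSet 𝒮 S j := by
  rw [condSet_stop_eq hν hS hj, Set.image_image]
  apply Set.image_congr
  intro T hT
  have hlt : j < ν T := lt_nu_of_agree hν hS hT.1 hj hT.2
  rw [stopTraj_eq_of_le hlt, stopTraj_eq_of_le (le_of_lt hj)]

/-- Trajectory based optional stopping: the stopped trajectory set of a
locally arbitrage-free (resp. locally 0-neutral) trajectory set is again locally
arbitrage-free (resp. locally 0-neutral). -/
theorem stmt19 (𝒮 : Set Traj) (ν : Traj → ℕ) (hν : IsStoppingTime 𝒮 ν) :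
    (LocallyArbitrageFree 𝒮 → LocallyArbitrageFree (stopSet 𝒮 ν)) ∧
      (LocallyZeroNeutral 𝒮 → LocallyZeroNeutral (stopSet 𝒮 ν)) := by
  constructor
  · -- locally arbitrage-free
    intro hfree Sb hSb j
    obtain ⟨S, hS, rfl⟩ := hSb
    rcases lt_or_ge j (ν S) with hj | hj
    · rcases hfree S hS j with ⟨⟨T1, hT1, hT1'⟩, ⟨T2, hT2, hT2'⟩⟩ | hflat
      · left
        have hSj : stopTraj ν S j = S j := stopTraj_eq_of_le (le_of_lt hj)
        have hmem : ∀ T, T ∈ condSet 𝒮 S j →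
            stopTraj ν T ∈ condSet (stopSet 𝒮 ν) (stopTraj ν S) j ∧
              stopTraj ν T (j + 1) = T (j + 1) := by
          intro T hT
          have hlt : j < ν T := lt_nu_of_agree hν hS hT.1 hj hT.2
          constructor
          · rw [condSet_stop_eq hν hS hj]; exact ⟨T, hT, rfl⟩
          · exact stopTraj_eq_of_le hlt
        obtain ⟨hm1, he1⟩ := hmem T1 hT1
        obtain ⟨hm2, he2⟩ := hmem T2 hT2
        exact ⟨⟨stopTraj ν T1, hm1, by rw [hSj, he1]; exact hT1'⟩,
          ⟨stopTraj ν T2, hm2, by rw [hSj, he2]; exact hT2'⟩⟩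
      · right
        intro Tb hTb
        rw [condSet_stop_eq hν hS hj] at hTb
        obtain ⟨T, hT, rfl⟩ := hTb
        have hlt : j < ν T := lt_nu_of_agree hν hS hT.1 hj hT.2
        rw [stopTraj_eq_of_le hlt, stopTraj_eq_of_le (le_of_lt hj)]
        exact hflat T hT
    · right
      exact stop_flat hν hS hj
  · -- locally 0-neutral
    intro hzn Sb hSb j
    obtain ⟨S, hS, rfl⟩ := hSb
    rcases lt_or_ge j (ν S) with hj | hj
    · have := hzn S hS j
      unfold ZeroNeutralNode at this ⊢
      rw [valueSet_stop_eq hν hS hj]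
      exact this
    · have hflat := stop_flat hν hS hj
      have hself : stopTraj ν S ∈ condSet (stopSet 𝒮 ν) (stopTraj ν S) j :=
        ⟨⟨S, hS, rfl⟩, fun i _ => rfl⟩
      have himg : (fun T => T (j + 1) - stopTraj ν S j) ''
          condSet (stopSet 𝒮 ν) (stopTraj ν S) j = {0} := by
        apply Set.eq_singleton_iff_unique_mem.2
        constructor
        · exact ⟨stopTraj ν S, hself, by
            show stopTraj ν S (j + 1) - stopTraj ν S j = 0
            rw [hflat _ hself]; ring⟩
        · rintro x ⟨T, hT, rfl⟩
          show T (j + 1) - stopTraj ν S j = 0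
          rw [hflat T hT]; ring
      unfold ZeroNeutralNode
      rw [himg]
      simp
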